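/- arXiv:0708.2771 — 5 statements merged into one kernel-verified Lean document; each statement's English description precedes it below -/
import Mathlib

section
/- Let m, r, n_1, …, n_m be positive integers, τ_1, …, τ_m nonnegative integers, N = n_1 + ⋯ + n_m, and A_k = (−1)^{k+N} C(N,k) ∏_{j=1}^{m} C(rk+n_j+τ_j, n_j) for 0 ≤ k ≤ N. Then ∑_{k=0}^{N} A_k = N!·r^N / (n_1!⋯n_m!). -/
/-!
Multiplying by `∏ j, n_j!` turns `C(r k + n_j + τ_j, n_j)` into the falling factorial
`(r k + n_j + τ_j)_{n_j}`, i.e. the value at `k` of a polynomial of degree `n_j` with leading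
coefficient `r ^ n_j`. So `∑ k, A k * ∏ j, n_j!` is the `N`-th forward difference at `0` of a
polynomial `P` of degree `N` with leading coefficient `r ^ N`, which is `N! r ^ N`.
-/

open Finset Polynomial
open scoped Nat fwdDiff

namespace Polynomial

variable {R : Type*} [CommRing R]

/-- The `d`-th forward difference at `0` of a polynomial of degree `d`, written out. -/
theorem sum_range_neg_one_pow_mul_choose_mul_eval (P : R[X]) :
    ∑ k ∈ range (P.natDegree + 1),
      (-1) ^ (k + P.natDegree) * (P.natDegree.choose k : R) * P.eval (k : R) =
      P.natDegree ! * P.leadingCoeff := by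
  have h := congr_fun P.fwdDiff_iter_degree_eq_factorial 0
  rw [fwdDiff_iter_eq_sum_shift, Pi.smul_apply, smul_eq_mul] at h
  simp only [zero_add, nsmul_eq_mul, mul_one, zsmul_eq_mul, Pi.natCast_apply] at h
  push_cast at h
  rw [mul_comm, ← h]
  refine sum_congr rfl fun k hk => ?_
  have hk : k ≤ P.natDegree := Nat.lt_succ_iff.mp (mem_range.mp hk)
  rw [show k + P.natDegree = (P.natDegree - k) + 2 * k by omega, pow_add, pow_mul, neg_one_sq,
    one_pow, mul_one]

section IsDomain

variable [IsDomain R] {a : R}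

theorem natDegree_descPochhammer_comp_linear (n : ℕ) (ha : a ≠ 0) (b : R) :
    ((descPochhammer R n).comp (C a * X + C b)).natDegree = n := by
  rw [natDegree_comp, descPochhammer_natDegree, natDegree_linear ha, mul_one]

theorem leadingCoeff_descPochhammer_comp_linear (n : ℕ) (ha : a ≠ 0) (b : R) :
    ((descPochhammer R n).comp (C a * X + C b)).leadingCoeff = a ^ n := by
  rw [leadingCoeff_comp (by rw [natDegree_linear ha]; exact one_ne_zero),
    (monic_descPochhammer R n).leadingCoeff, leadingCoeff_linear ha, descPochhammer_natDegree,
    one_mul]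

variable {ι : Type*} (s : Finset ι) (n : ι → ℕ) (b : ι → R)

theorem leadingCoeff_prod_descPochhammer_comp_linear (ha : a ≠ 0) :
    (∏ i ∈ s, (descPochhammer R (n i)).comp (C a * X + C (b i))).leadingCoeff =
      a ^ ∑ i ∈ s, n i := by
  rw [leadingCoeff_prod, ← prod_pow_eq_pow_sum]
  exact prod_congr rfl fun i _ => leadingCoeff_descPochhammer_comp_linear _ ha _

theorem natDegree_prod_descPochhammer_comp_linear (ha : a ≠ 0) :
    (∏ i ∈ s, (descPochhammer R (n i)).comp (C a * X + C (b i))).natDegree =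
      ∑ i ∈ s, n i := by
  rw [natDegree_prod _ _ fun i _ => leadingCoeff_ne_zero.mp ?_]
  · exact sum_congr rfl fun i _ => natDegree_descPochhammer_comp_linear _ ha _
  · rw [leadingCoeff_descPochhammer_comp_linear _ ha]
    exact pow_ne_zero _ ha

end IsDomain

end Polynomial

theorem stmt_11_general (m r : ℕ) (hr : 0 < r) (n τ : ℕ → ℕ)
    (N : ℕ) (hN : N = ∑ j ∈ Finset.Icc 1 m, n j)
    (A : ℕ → ℝ)
    (hA : ∀ k ≤ N, A k = (-1 : ℝ) ^ (k + N) * (N.choose k : ℝ) *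
      ∏ j ∈ Finset.Icc 1 m, ((r * k + n j + τ j).choose (n j) : ℝ)) :
    ∑ k ∈ Finset.range (N + 1), A k =
      (N.factorial : ℝ) * (r : ℝ) ^ N / ∏ j ∈ Finset.Icc 1 m, ((n j).factorial : ℝ) := by
  set P : ℝ[X] := ∏ j ∈ Icc 1 m,
    (descPochhammer ℝ (n j)).comp (C (r : ℝ) * X + C ((n j + τ j : ℕ) : ℝ))
  have hr' : (r : ℝ) ≠ 0 := by positivity
  have hdeg : P.natDegree = N := by rw [natDegree_prod_descPochhammer_comp_linear _ _ _ hr', hN]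
  have hlead : P.leadingCoeff = r ^ N := by
    rw [leadingCoeff_prod_descPochhammer_comp_linear _ _ _ hr', hN]
  have heval (k : ℕ) : ∏ j ∈ Icc 1 m, ((r * k + n j + τ j).choose (n j) : ℝ) =
      P.eval (k : ℝ) / ∏ j ∈ Icc 1 m, ((n j)! : ℝ) := by
    rw [eval_prod, ← prod_div_distrib]
    refine prod_congr rfl fun j _ => ?_
    rw [Nat.cast_choose_eq_descPochhammer_div, eval_comp]
    push_cast
    simp [add_assoc]
  calc ∑ k ∈ range (N + 1), A k
      = ∑ k ∈ range (N + 1), (-1) ^ (k + N) * (N.choose k : ℝ) * P.eval (k : ℝ) /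
          ∏ j ∈ Icc 1 m, ((n j)! : ℝ) :=
        sum_congr rfl fun k hk => by
          rw [hA k (Nat.lt_succ_iff.mp (mem_range.mp hk)), heval, mul_div_assoc]
    _ = _ := by
      rw [← sum_div, ← hdeg, sum_range_neg_one_pow_mul_choose_mul_eval, hdeg, hlead]

theorem stmt_11 (m r : ℕ) (hm : 0 < m) (hr : 0 < r) (n τ : ℕ → ℕ)
    (hn : ∀ j, 1 ≤ j → j ≤ m → 0 < n j)
    (N : ℕ) (hN : N = ∑ j ∈ Finset.Icc 1 m, n j)
    (A : ℕ → ℝ)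
    (hA : ∀ k ≤ N, A k = (-1 : ℝ) ^ (k + N) * (N.choose k : ℝ) *
      ∏ j ∈ Finset.Icc 1 m, ((r * k + n j + τ j).choose (n j) : ℝ)) :
    ∑ k ∈ Finset.range (N + 1), A k =
      (N.factorial : ℝ) * (r : ℝ) ^ N / ∏ j ∈ Finset.Icc 1 m, ((n j).factorial : ℝ) :=
  stmt_11_general m r hr n τ N hN A hA
end

section
/- Let m, r, n_1, …, n_m be positive integers, τ_1, …, τ_m nonnegative integers, N = n_1 + ⋯ + n_m, and define the rational function R(t) = [N!/(n_1!⋯n_m!)] · (rt−n_1−τ_1)_{n_1} (rt−n_2−τ_2)_{n_2} ⋯ (rt−n_m−τ_m)_{n_m} / (t(t+1)⋯(t+N)). Then R has the partial-fraction expansion R(t) = ∑_{k=0}^{N} A_k/(t+k), where A_k = (−1)^{k+N} C(N,k) ∏_{j=1}^{m} C(rk+n_j+τ_j, n_j); equivalently, for each k the residue of R at t = −k equals A_k. -/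
/-!
The numerator `P(t) = c ∏ⱼ (rt - nⱼ - τⱼ)_{nⱼ}` is a polynomial of degree at most `N`, and the
denominator is the nodal polynomial of the `N + 1` nodes `-k`, so the barycentric form of Lagrange
interpolation gives `P(t) / ∏ₖ (t + k) = ∑ₖ wₖ P(-k) / (t + k)` with nodal weights
`wₖ = (∏_{i ≠ k} (i - k))⁻¹ = (-1)ᵏ C(N, k) / N!`. At `t = -k` each Pochhammer factor is
`(-(rk + nⱼ + τⱼ))_{nⱼ} = (-1)^{nⱼ} nⱼ! C(rk + nⱼ + τⱼ, nⱼ)`, and the factorials cancel against `c`.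
-/

open Finset Polynomial Lagrange
open scoped Nat

theorem Lagrange.eval_div_eval_nodal {F ι : Type*} [Field F] [DecidableEq ι] {s : Finset ι}
    {v : ι → F} {p : F[X]} {x : F} (hvs : Set.InjOn v s) (hp : p.degree < #s)
    (hx : ∀ i ∈ s, x ≠ v i) :
    p.eval x / (nodal s v).eval x = ∑ i ∈ s, nodalWeight s v i * p.eval (v i) / (x - v i) := by
  conv_lhs => rw [eq_interpolate hvs hp]
  rw [eval_interpolate_not_at_node _ hx, mul_div_cancel_left₀ _ (eval_nodal_not_at_node hx)]
  exact sum_congr rfl fun i _ => by ring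

theorem prod_range_succ_erase_sub {R : Type*} [CommRing R] {N k : ℕ} (hk : k ≤ N) :
    ∏ i ∈ (range (N + 1)).erase k, ((i : R) - k) = (-1) ^ k * k ! * (N - k)! := by
  induction N, hk using Nat.le_induction with
  | base =>
    have hfact : ∏ i ∈ range k, ((k : R) - i) = k ! := by
      rw [← descPochhammer_eval_eq_prod_range, descPochhammer_eval_eq_descFactorial,
        Nat.descFactorial_self]
    have hsign : (-1 : R) ^ k = ∏ _i ∈ range k, -1 := by simp
    rw [range_add_one, erase_insert notMem_range_self, Nat.sub_self, Nat.factorial_zero,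
      Nat.cast_one, mul_one, ← hfact, hsign, ← prod_mul_distrib]
    exact prod_congr rfl fun i _ => by ring
  | succ N hkN ih =>
    rw [range_add_one, erase_insert_of_ne (by omega), prod_insert (by simp), ih,
      Nat.succ_sub hkN, Nat.factorial_succ]
    push_cast [Nat.cast_sub hkN]
    ring

theorem nodalWeight_range_neg {K : Type*} [Field K] [CharZero K] {N k : ℕ} (hk : k ≤ N) :
    nodalWeight (range (N + 1)) (fun i : ℕ => -(i : K)) k = (-1) ^ k * N.choose k / N ! := by
  have hfact : (N ! : K) = N.choose k * k ! * (N - k)! := by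
    exact_mod_cast (Nat.choose_mul_factorial_mul_factorial hk).symm
  rw [nodalWeight, prod_inv_distrib]
  simp only [neg_sub_neg]
  have hchoose : (N.choose k : K) ≠ 0 := by exact_mod_cast (Nat.choose_pos hk).ne'
  rw [prod_range_succ_erase_sub hk, hfact]
  have hsq : ((-1 : K) ^ k) ^ 2 = 1 := by rw [← pow_mul, mul_comm, pow_mul]; norm_num
  field_simp
  rw [hsq]

theorem ascPochhammer_eval_neg_natCast {R : Type*} [CommRing R] (a n : ℕ) :
    (ascPochhammer R n).eval (-(a : R)) = (-1) ^ n * n ! * a.choose n := by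
  rw [ascPochhammer_eval_neg_eq_descPochhammer, descPochhammer_eval_eq_descFactorial,
    Nat.descFactorial_eq_factorial_mul_choose]
  push_cast
  ring

theorem natDegree_prod_ascPochhammer_comp_le {R ι : Type*} [CommRing R] [IsDomain R]
    (s : Finset ι) (n : ι → ℕ) (a : R) (b : ι → R) :
    (∏ j ∈ s, (ascPochhammer R (n j)).comp (C a * X - C (b j))).natDegree ≤ ∑ j ∈ s, n j := by
  refine (natDegree_prod_le _ _).trans (sum_le_sum fun j _ => natDegree_comp_le.trans ?_)
  rw [ascPochhammer_natDegree]
  have hlin : (C a * X - C (b j)).natDegree ≤ 1 := by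
    rw [sub_eq_add_neg, ← C_neg]
    exact natDegree_linear_le
  simpa using Nat.mul_le_mul_left (n j) hlin

theorem prod_ascPochhammer_eval_neg_natCast {R ι : Type*} [CommRing R] (s : Finset ι)
    (n a : ι → ℕ) :
    ∏ j ∈ s, (ascPochhammer R (n j)).eval (-(a j : R)) =
      (-1) ^ (∑ j ∈ s, n j) * (∏ j ∈ s, ((n j)! : R)) * ∏ j ∈ s, ((a j).choose (n j) : R) := by
  simp only [ascPochhammer_eval_neg_natCast, prod_mul_distrib, prod_pow_eq_pow_sum]

theorem stmt_12_general (m r : ℕ) (n τ : ℕ → ℕ)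
    (N : ℕ) (hN : N = ∑ j ∈ Finset.Icc 1 m, n j)
    (A : ℕ → ℝ)
    (hA : ∀ k ≤ N, A k = (-1 : ℝ) ^ (k + N) * (N.choose k : ℝ) *
      ∏ j ∈ Finset.Icc 1 m, ((r * k + n j + τ j).choose (n j) : ℝ))
    (R : ℝ → ℝ)
    (hR : ∀ t : ℝ, R t =
      ((N.factorial : ℝ) / ∏ j ∈ Finset.Icc 1 m, ((n j).factorial : ℝ)) *
        (∏ j ∈ Finset.Icc 1 m,
          (ascPochhammer ℝ (n j)).eval ((r : ℝ) * t - n j - τ j)) /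
        ∏ k ∈ Finset.range (N + 1), (t + k)) :
    ∀ t : ℝ, (∀ k ∈ Finset.range (N + 1), t + k ≠ 0) →
      R t = ∑ k ∈ Finset.range (N + 1), A k / (t + k) := by
  intro t ht
  set c : ℝ := N ! / ∏ j ∈ Icc 1 m, ((n j)! : ℝ)
  set P : ℝ[X] :=
    C c * ∏ j ∈ Icc 1 m, (ascPochhammer ℝ (n j)).comp (C (r : ℝ) * X - C ((n j : ℝ) + τ j))
  have hP : ∀ x,
      P.eval x = c * ∏ j ∈ Icc 1 m, (ascPochhammer ℝ (n j)).eval (r * x - n j - τ j) := fun x => by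
    simp only [P, eval_mul, eval_C, eval_prod, eval_comp, eval_sub, eval_X, sub_sub]
  have hdeg : P.degree < #(range (N + 1)) := by
    refine degree_le_natDegree.trans_lt ?_
    rw [card_range, Nat.cast_lt, Nat.lt_succ_iff, hN]
    exact natDegree_C_mul_le _ _ |>.trans (natDegree_prod_ascPochhammer_comp_le _ _ _ _)
  have hnode : ∀ k ≤ N,
      nodalWeight (range (N + 1)) (fun i : ℕ => -(i : ℝ)) k * P.eval (-(k : ℝ)) = A k := by
    intro k hk
    have harg : ∀ j, (r : ℝ) * -(k : ℝ) - n j - τ j = -((r * k + n j + τ j : ℕ) : ℝ) :=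
      fun j => by push_cast; ring
    have hfac : (∏ j ∈ Icc 1 m, ((n j)! : ℝ)) ≠ 0 :=
      prod_ne_zero_iff.mpr fun j _ => by positivity
    simp only [hP, harg, prod_ascPochhammer_eval_neg_natCast, ← hN, nodalWeight_range_neg hk,
      hA k hk, c]
    field_simp
    ring
  have hnodal :
      (nodal (range (N + 1)) (fun i : ℕ => -(i : ℝ))).eval t = ∏ k ∈ range (N + 1), (t + k) := by
    simp [eval_nodal]
  rw [hR, ← hP, ← hnodal, eval_div_eval_nodal (fun i _ j _ h => by simpa using h) hdeg
    fun k hk h => ht k hk (by simp [h])]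
  exact sum_congr rfl fun k hk => by
    rw [hnode k (Nat.lt_succ_iff.mp (mem_range.mp hk)), sub_neg_eq_add]

theorem stmt_12 (m r : ℕ) (hm : 0 < m) (hr : 0 < r) (n τ : ℕ → ℕ)
    (hn : ∀ j, 1 ≤ j → j ≤ m → 0 < n j)
    (N : ℕ) (hN : N = ∑ j ∈ Finset.Icc 1 m, n j)
    (A : ℕ → ℝ)
    (hA : ∀ k ≤ N, A k = (-1 : ℝ) ^ (k + N) * (N.choose k : ℝ) *
      ∏ j ∈ Finset.Icc 1 m, ((r * k + n j + τ j).choose (n j) : ℝ))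
    (R : ℝ → ℝ)
    (hR : ∀ t : ℝ, R t =
      ((N.factorial : ℝ) / ∏ j ∈ Finset.Icc 1 m, ((n j).factorial : ℝ)) *
        (∏ j ∈ Finset.Icc 1 m,
          (ascPochhammer ℝ (n j)).eval ((r : ℝ) * t - n j - τ j)) /
        ∏ k ∈ Finset.range (N + 1), (t + k)) :
    ∀ t : ℝ, (∀ k ∈ Finset.range (N + 1), t + k ≠ 0) →
      R t = ∑ k ∈ Finset.range (N + 1), A k / (t + k) :=
  stmt_12_general m r n τ N hN A hA R hR
end

section
/- Let α ≥ 0 be a real number, m, r, n_1, …, n_m positive integers, τ_0, τ_1, …, τ_m nonnegative integers, N = n_1 + ⋯ + n_m, A(x) = ∑_{k=0}^{N} A_k x^{rk} with A_k = (−1)^{k+N} C(N,k) ∏_{j=1}^{m} C(rk+n_j+τ_j, n_j), and I(α) = ∫_0^1 x^{τ_0+α} A(x) (1/(1−x) + 1/log x) dx. Then I(α) = [N!·r^N/(n_1!⋯n_m!)] · γ_α − ∑_{k=0}^{N} A_k S_{rk+τ_0}(α). -/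
/-!
The coefficient `A_k` is `(-1)^(k+N) C(N,k) P(k) / ∏ n_j!` for the polynomial
`P(x) = ∏_j ∏_{i < n_j} (r x + τ_j + i + 1)`, which has degree at most `N` and `x^N`-coefficient
`r^N`; hence `∑ A_k`, an `N`-th finite difference, equals `N! r^N / ∏ n_j!`.

With `K(s) = ∫₀¹ x^s (1/(1-x) + 1/log x) dx` the integral is `∑ A_k K(rk + τ₀ + α)`, and
`K(c + α) = γ_α - S_c(α)`: summing a geometric series and using
`∫₀¹ (x^b - x^a) / log x dx = log ((b+1)/(a+1))` (Fubini applied to `∫_a^b x^t dt`) gives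
`K(s) - K(s + M) = S_{c+M}(α) - S_c(α)` for `s = c + α`, while `0 ≤ 1/(1-x) + 1/log x ≤ 1` on
`(0,1)` gives `|K(s + M)| ≤ 1/(s + M + 1) → 0`.
-/

open Finset

/-- `S_n(α) = ∑_{k=1}^n (1/(k+α) − log((k+α+1)/(k+α)))`. -/
noncomputable def Sa (α : ℝ) (n : ℕ) : ℝ :=
  ∑ k ∈ Finset.range n,
    (1 / ((k : ℝ) + 1 + α) - Real.log (((k : ℝ) + 1 + α + 1) / ((k : ℝ) + 1 + α)))

open scoped Nat

section FiniteDifferences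

open Polynomial

theorem Polynomial.sum_range_neg_one_pow_mul_choose_mul_eval_s13 {R : Type*} [CommRing R]
    {P : R[X]} {N : ℕ} (hP : P.natDegree ≤ N) :
    ∑ k ∈ range (N + 1), (-1 : R) ^ (k + N) * N.choose k * P.eval (k : R) = N ! * P.coeff N := by
  have hΔ : (fwdDiff 1)^[N] P.eval 0 = N ! * P.coeff N := by
    rcases hP.lt_or_eq with hlt | rfl
    · simp [fwdDiff_iter_eq_zero_of_degree_lt hlt, coeff_eq_zero_of_natDegree_lt hlt]
    · simp [fwdDiff_iter_degree_eq_factorial, mul_comm]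
  rw [← hΔ, fwdDiff_iter_eq_sum_shift]
  refine sum_congr rfl fun k hk => ?_
  obtain ⟨j, rfl⟩ := Nat.exists_eq_add_of_le (Nat.lt_succ_iff.1 (mem_range.1 hk))
  rw [Nat.add_sub_cancel_left, ← add_assoc, pow_add, Even.neg_one_pow ⟨k, rfl⟩]
  simp [zsmul_eq_mul]

theorem Polynomial.coeff_card_prod_C_mul_X_add_C {R ι : Type*} [CommSemiring R] (s : Finset ι)
    (a b : ι → R) :
    (∏ i ∈ s, (C (a i) * X + C (b i))).coeff #s = ∏ i ∈ s, a i := by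
  simpa using coeff_prod_of_natDegree_le (s := s) (fun i => C (a i) * X + C (b i)) 1
    (fun i _ => natDegree_linear_le)

theorem Polynomial.natDegree_prod_C_mul_X_add_C_le {R ι : Type*} [CommSemiring R] (s : Finset ι)
    (a b : ι → R) :
    (∏ i ∈ s, (C (a i) * X + C (b i))).natDegree ≤ #s :=
  (natDegree_prod_le _ _).trans <| by
    simpa using sum_le_sum (s := s) fun i _ => natDegree_linear_le (a := a i) (b := b i)

theorem sum_range_neg_one_pow_mul_choose_mul_prod_choose {K ι : Type*} [Field K] [CharZero K]
    (s : Finset ι) (r : ℕ) (n τ : ι → ℕ) :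
    ∑ k ∈ range (∑ j ∈ s, n j + 1), (-1 : K) ^ (k + ∑ j ∈ s, n j) *
        ((∑ j ∈ s, n j).choose k : K) * ∏ j ∈ s, ((r * k + n j + τ j).choose (n j) : K) =
      (∑ j ∈ s, n j)! * (r : K) ^ (∑ j ∈ s, n j) / ∏ j ∈ s, ((n j)! : K) := by
  set P : K[X] := ∏ p ∈ s.sigma fun j => range (n j),
    (C (r : K) * X + C ((τ p.1 + p.2 + 1 : ℕ) : K))
  have hcard : #(s.sigma fun j => range (n j)) = ∑ j ∈ s, n j := by simp [card_sigma]
  have heval (k : ℕ) : P.eval (k : K) =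
      (∏ j ∈ s, ((r * k + n j + τ j).choose (n j) : K)) * ∏ j ∈ s, ((n j)! : K) := by
    rw [eval_prod, prod_sigma, ← prod_mul_distrib]
    refine prod_congr rfl fun j _ => ?_
    have hascFactorial : ∏ i ∈ range (n j), (r * k + τ j + i + 1) =
        (r * k + n j + τ j).choose (n j) * (n j)! := by
      rw [add_right_comm _ (n j), mul_comm _ (n j)!, ← Nat.ascFactorial_eq_factorial_mul_choose,
        Nat.ascFactorial_eq_prod_range]
      exact prod_congr rfl fun i _ => by ring
    rw [← Nat.cast_mul, ← hascFactorial]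
    push_cast
    exact prod_congr rfl fun i _ => by simp; ring
  have hdeg : P.natDegree ≤ ∑ j ∈ s, n j := hcard ▸ natDegree_prod_C_mul_X_add_C_le _ _ _
  have hD : ∏ j ∈ s, ((n j)! : K) ≠ 0 :=
    prod_ne_zero_iff.2 fun j _ => Nat.cast_ne_zero.2 (Nat.factorial_ne_zero _)
  rw [eq_div_iff hD, sum_mul]
  simp_rw [mul_assoc, ← heval, ← mul_assoc]
  rw [sum_range_neg_one_pow_mul_choose_mul_eval_s13 hdeg, ← hcard, coeff_card_prod_C_mul_X_add_C]
  simp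

end FiniteDifferences

section EulerIntegral

open MeasureTheory Filter Topology

noncomputable def eulerKernel (x : ℝ) : ℝ := 1 / (1 - x) + 1 / Real.log x

theorem eulerKernel_mem_Icc {x : ℝ} (hx : x ∈ Set.Ioo 0 1) : eulerKernel x ∈ Set.Icc 0 1 := by
  obtain ⟨hx0, hx1⟩ := hx
  have hlog : 0 < -Real.log x := neg_pos.2 (Real.log_neg hx0 hx1)
  have h1x : 0 < 1 - x := sub_pos.2 hx1
  have hlower : 1 - x ≤ -Real.log x := by linarith [Real.log_le_sub_one_of_pos hx0]
  have hupper : x * -Real.log x ≤ 1 - x := by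
    nlinarith [Real.one_sub_inv_le_log_of_pos hx0, mul_inv_cancel₀ hx0.ne']
  have hK : eulerKernel x = 1 / (1 - x) - 1 / -Real.log x := by
    rw [eulerKernel, one_div_neg_eq_neg_one_div, sub_neg_eq_add]
  rw [hK]
  constructor
  · exact sub_nonneg.2 (one_div_le_one_div_of_le h1x hlower)
  · rw [div_sub_div _ _ h1x.ne' hlog.ne', div_le_one (by positivity)]
    linarith

@[fun_prop]
theorem measurable_eulerKernel : Measurable eulerKernel := by
  unfold eulerKernel
  fun_prop

theorem integrableOn_rpow_Ioo {s : ℝ} (hs : -1 < s) :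
    IntegrableOn (fun x : ℝ => x ^ s) (Set.Ioo 0 1) :=
  ((intervalIntegrable_iff_integrableOn_Ioc_of_le zero_le_one).1
    (intervalIntegral.intervalIntegrable_rpow' hs)).mono_set Set.Ioo_subset_Ioc_self

theorem integral_rpow_Ioo {s : ℝ} (hs : -1 < s) : ∫ x in Set.Ioo 0 1, x ^ s = 1 / (s + 1) := by
  rw [← integral_Ioc_eq_integral_Ioo, ← intervalIntegral.integral_of_le zero_le_one,
    integral_rpow (Or.inl hs), Real.zero_rpow (by linarith)]
  simp

theorem norm_rpow_mul_eulerKernel_le (s : ℝ) {x : ℝ} (hx : x ∈ Set.Ioo 0 1) :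
    ‖x ^ s * eulerKernel x‖ ≤ x ^ s := by
  obtain ⟨hK0, hK1⟩ := eulerKernel_mem_Icc hx
  have hxs : 0 ≤ x ^ s := Real.rpow_nonneg hx.1.le s
  rw [Real.norm_eq_abs, abs_of_nonneg (mul_nonneg hxs hK0)]
  exact mul_le_of_le_one_right hxs hK1

theorem integrableOn_rpow_mul_eulerKernel {s : ℝ} (hs : -1 < s) :
    IntegrableOn (fun x : ℝ => x ^ s * eulerKernel x) (Set.Ioo 0 1) :=
  (integrableOn_rpow_Ioo hs).mono' (by fun_prop)
    ((ae_restrict_mem measurableSet_Ioo).mono fun _ hx => norm_rpow_mul_eulerKernel_le s hx)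

theorem integral_const_rpow {x : ℝ} (hx0 : 0 < x) (hx1 : x ≠ 1) (a b : ℝ) :
    ∫ t in a..b, x ^ t = (x ^ b - x ^ a) / Real.log x := by
  have hlog : Real.log x ≠ 0 := Real.log_ne_zero_of_pos_of_ne_one hx0 hx1
  have hderiv (t : ℝ) : HasDerivAt (fun t => x ^ t / Real.log x) (x ^ t) t := by
    simpa [hlog] using ((Real.hasStrictDerivAt_const_rpow hx0 t).hasDerivAt.div_const
      (Real.log x))
  rw [intervalIntegral.integral_eq_sub_of_hasDerivAt (fun t _ => hderiv t)
    ((Real.continuous_const_rpow hx0.ne').intervalIntegrable a b), sub_div]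

theorem integrable_uncurry_rpow_prod {a b : ℝ} (ha : -1 < a) :
    Integrable (Function.uncurry fun x t : ℝ => x ^ t)
      ((volume.restrict (Set.Ioo 0 1)).prod (volume.restrict (Set.Ioc a b))) := by
  have hbound : Integrable (fun p : ℝ × ℝ => p.1 ^ a)
      ((volume.restrict (Set.Ioo 0 1)).prod (volume.restrict (Set.Ioc a b))) :=
    (integrableOn_rpow_Ioo ha).comp_fst _
  refine hbound.mono' (by fun_prop) ?_
  rw [Measure.prod_restrict]
  filter_upwards [ae_restrict_mem (measurableSet_Ioo.prod measurableSet_Ioc)]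
    with ⟨x, t⟩ ⟨⟨hx0, hx1⟩, hat, _⟩
  rw [Function.uncurry_apply_pair, Real.norm_eq_abs, abs_of_nonneg (Real.rpow_nonneg hx0.le t)]
  exact Real.rpow_le_rpow_of_exponent_ge hx0 hx1.le hat.le

theorem rpow_sub_rpow_div_log_ae_eq {a b : ℝ} (hab : a ≤ b) :
    (fun x : ℝ => (x ^ b - x ^ a) / Real.log x) =ᵐ[volume.restrict (Set.Ioo 0 1)]
      fun x => ∫ t in Set.Ioc a b, x ^ t := by
  filter_upwards [ae_restrict_mem measurableSet_Ioo] with x ⟨hx0, hx1⟩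
  rw [← intervalIntegral.integral_of_le hab, integral_const_rpow hx0 hx1.ne]

theorem integrableOn_rpow_sub_rpow_div_log {a b : ℝ} (ha : -1 < a) (hab : a ≤ b) :
    IntegrableOn (fun x : ℝ => (x ^ b - x ^ a) / Real.log x) (Set.Ioo 0 1) :=
  (integrable_uncurry_rpow_prod ha).integral_prod_left.congr (rpow_sub_rpow_div_log_ae_eq hab).symm

theorem integral_rpow_sub_rpow_div_log {a b : ℝ} (ha : -1 < a) (hab : a ≤ b) :
    ∫ x in Set.Ioo 0 1, (x ^ b - x ^ a) / Real.log x = Real.log (b + 1) - Real.log (a + 1) := by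
  have hinner : ∀ t ∈ Set.Ioc a b, ∫ x in Set.Ioo 0 1, x ^ t = (t + 1)⁻¹ := fun t ht => by
    rw [integral_rpow_Ioo (ha.trans ht.1), one_div]
  rw [integral_congr_ae (rpow_sub_rpow_div_log_ae_eq hab),
    integral_integral_swap (integrable_uncurry_rpow_prod ha),
    setIntegral_congr_fun measurableSet_Ioc hinner,
    ← intervalIntegral.integral_of_le hab,
    intervalIntegral.integral_comp_add_right (fun t => t⁻¹), integral_inv, Real.log_div]
  · linarith
  · linarith
  · rw [Set.uIcc_of_le (by linarith)]
    exact fun h => by linarith [h.1]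

noncomputable def eulerIntegral (s : ℝ) : ℝ := ∫ x in Set.Ioo 0 1, x ^ s * eulerKernel x

theorem norm_eulerIntegral_le {s : ℝ} (hs : -1 < s) : ‖eulerIntegral s‖ ≤ 1 / (s + 1) :=
  integral_rpow_Ioo hs ▸ norm_integral_le_of_norm_le (integrableOn_rpow_Ioo hs)
    ((ae_restrict_mem measurableSet_Ioo).mono fun _ hx => norm_rpow_mul_eulerKernel_le s hx)

theorem tendsto_eulerIntegral_add_nat {s : ℝ} (hs : -1 < s) :
    Tendsto (fun M : ℕ => eulerIntegral (s + M)) atTop (𝓝 0) := by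
  have hden : Tendsto (fun M : ℕ => s + M + 1) atTop atTop :=
    tendsto_atTop_add_const_right _ _ (tendsto_atTop_add_const_left _ _ tendsto_natCast_atTop_atTop)
  refine squeeze_zero_norm (fun M => norm_eulerIntegral_le ?_) (tendsto_const_nhds.div_atTop hden)
  linarith [M.cast_nonneg (α := ℝ)]

theorem rpow_sub_rpow_add_nat_mul_eulerKernel {x : ℝ} (hx : x ∈ Set.Ioo 0 1) (s : ℝ) (M : ℕ) :
    (x ^ s - x ^ (s + M)) * eulerKernel x =
      ∑ i ∈ range M, x ^ (s + i) - (x ^ (s + M) - x ^ s) / Real.log x := by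
  obtain ⟨hx0, hx1⟩ := hx
  have hlog : Real.log x ≠ 0 := Real.log_ne_zero_of_pos_of_ne_one hx0 hx1.ne
  have h1x : 1 - x ≠ 0 := sub_ne_zero.2 hx1.ne'
  have hpow (i : ℕ) : x ^ (s + i) = x ^ s * x ^ i := by rw [Real.rpow_add hx0, Real.rpow_natCast]
  simp only [hpow, ← mul_sum, eulerKernel]
  field_simp
  linear_combination Real.log x * geom_sum_mul x M

theorem eulerIntegral_sub_eulerIntegral_add_nat {s : ℝ} (hs : -1 < s) (M : ℕ) :
    eulerIntegral s - eulerIntegral (s + M) =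
      ∑ i ∈ range M, 1 / (s + i + 1) - (Real.log (s + M + 1) - Real.log (s + 1)) := by
  have hsi (i : ℕ) : -1 < s + i := by linarith [i.cast_nonneg (α := ℝ)]
  rw [eulerIntegral, eulerIntegral, ← integral_sub (integrableOn_rpow_mul_eulerKernel hs)
      (integrableOn_rpow_mul_eulerKernel (hsi M)),
    setIntegral_congr_fun measurableSet_Ioo fun x hx => by
      rw [← sub_mul, rpow_sub_rpow_add_nat_mul_eulerKernel hx],
    integral_sub (integrable_finsetSum _ fun i _ => integrableOn_rpow_Ioo (hsi i))
      (integrableOn_rpow_sub_rpow_div_log hs (by linarith [hsi M])),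
    integral_finsetSum _ fun i _ => integrableOn_rpow_Ioo (hsi i),
    integral_rpow_sub_rpow_div_log hs (by linarith [hsi M])]
  simp only [integral_rpow_Ioo (hsi _)]

theorem Sa_add_sub_Sa {α : ℝ} (hα : -1 < α) (c M : ℕ) :
    Sa α (c + M) - Sa α c = ∑ i ∈ range M, 1 / ((c + α) + i + 1) -
      (Real.log ((c + α) + M + 1) - Real.log ((c + α) + 1)) := by
  have hpos (i : ℕ) : 0 < (c : ℝ) + α + i + 1 := by
    linarith [i.cast_nonneg (α := ℝ), c.cast_nonneg (α := ℝ)]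
  rw [Sa, Sa, sum_range_add, add_sub_cancel_left, sum_sub_distrib]
  congr 1
  · exact sum_congr rfl fun i _ => by push_cast; ring_nf
  · have hlog (i : ℕ) : Real.log ((((c + i : ℕ) : ℝ) + 1 + α + 1) / (((c + i : ℕ) : ℝ) + 1 + α)) =
        Real.log ((c + α) + (i + 1 : ℕ) + 1) - Real.log ((c + α) + i + 1) := by
      rw [← Real.log_div (hpos (i + 1)).ne' (hpos i).ne']
      push_cast
      ring_nf
    rw [sum_congr rfl fun i _ => hlog i, sum_range_sub (fun i => Real.log ((c + α) + i + 1))]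
    simp

theorem eulerIntegral_natCast_add {α γ : ℝ} (hα : -1 < α) (hγ : Tendsto (Sa α) atTop (𝓝 γ))
    (c : ℕ) : eulerIntegral (c + α) = γ - Sa α c := by
  have hs : -1 < (c : ℝ) + α := by linarith [c.cast_nonneg (α := ℝ)]
  have hshift : Tendsto (fun M => Sa α (c + M)) atTop (𝓝 γ) :=
    hγ.comp ((tendsto_add_atTop_nat c).congr fun M => add_comm M c)
  have hlim : Tendsto (fun M => Sa α (c + M)) atTop (𝓝 (Sa α c + (eulerIntegral (c + α) - 0))) :=
    (tendsto_const_nhds.sub (tendsto_eulerIntegral_add_nat hs)).const_add _ |>.congr fun M => by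
      rw [eulerIntegral_sub_eulerIntegral_add_nat hs, ← Sa_add_sub_Sa hα, add_sub_cancel (Sa α c)]
  linarith [tendsto_nhds_unique hshift hlim]

theorem intervalIntegral_rpow_mul_sum_mul_eulerKernel {α : ℝ} (hα : -1 < α) (c : ℕ)
    (s : Finset ℕ) (A : ℕ → ℝ) (e : ℕ → ℕ) :
    ∫ x in (0 : ℝ)..1, x ^ ((c : ℝ) + α) * (∑ k ∈ s, A k * x ^ e k) *
        (1 / (1 - x) + 1 / Real.log x) =
      ∑ k ∈ s, A k * eulerIntegral ((e k + c : ℕ) + α) := by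
  have hpos (k : ℕ) : -1 < ((e k + c : ℕ) : ℝ) + α := by
    linarith [(e k + c).cast_nonneg (α := ℝ)]
  have hintegrand : ∀ x ∈ Set.Ioo (0 : ℝ) 1,
      x ^ ((c : ℝ) + α) * (∑ k ∈ s, A k * x ^ e k) * (1 / (1 - x) + 1 / Real.log x) =
        ∑ k ∈ s, A k * (x ^ (((e k + c : ℕ) : ℝ) + α) * eulerKernel x) := fun x hx => by
    simp only [mul_sum, sum_mul, eulerKernel]
    refine sum_congr rfl fun k _ => ?_
    have hpow : x ^ (((e k + c : ℕ) : ℝ) + α) = x ^ ((c : ℝ) + α) * x ^ e k := by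
      rw [Nat.cast_add, add_comm (e k : ℝ), add_right_comm, Real.rpow_add hx.1, Real.rpow_natCast]
    rw [hpow]
    ring
  rw [intervalIntegral.integral_of_le zero_le_one, integral_Ioc_eq_integral_Ioo,
    setIntegral_congr_fun measurableSet_Ioo hintegrand,
    integral_finsetSum _ fun k _ => (integrableOn_rpow_mul_eulerKernel (hpos k)).const_mul _]
  simp only [integral_const_mul, eulerIntegral]

end EulerIntegral

theorem stmt_13_general (α : ℝ) (hα : 0 ≤ α)
    (γα : ℝ) (hγα : Filter.Tendsto (Sa α) Filter.atTop (nhds γα))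
    (m r : ℕ) (n τ : ℕ → ℕ)
    (N : ℕ) (hN : N = ∑ j ∈ Finset.Icc 1 m, n j)
    (A : ℕ → ℝ)
    (hA : ∀ k ≤ N, A k = (-1 : ℝ) ^ (k + N) * (N.choose k : ℝ) *
      ∏ j ∈ Finset.Icc 1 m, ((r * k + n j + τ j).choose (n j) : ℝ)) :
    (∫ x in (0 : ℝ)..1,
        x ^ ((τ 0 : ℝ) + α) * (∑ k ∈ Finset.range (N + 1), A k * x ^ (r * k)) *
          (1 / (1 - x) + 1 / Real.log x)) =
      ((N.factorial : ℝ) * (r : ℝ) ^ N / ∏ j ∈ Finset.Icc 1 m, ((n j).factorial : ℝ)) * γα -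
        ∑ k ∈ Finset.range (N + 1), A k * Sa α (r * k + τ 0) := by
  have hsumA : ∑ k ∈ range (N + 1), A k =
      N.factorial * (r : ℝ) ^ N / ∏ j ∈ Icc 1 m, ((n j).factorial : ℝ) := by
    rw [sum_congr rfl fun k hk => hA k (Nat.lt_succ_iff.1 (mem_range.1 hk)), hN]
    exact sum_range_neg_one_pow_mul_choose_mul_prod_choose _ r n τ
  have hα' : -1 < α := by linarith
  rw [intervalIntegral_rpow_mul_sum_mul_eulerKernel hα']
  simp only [eulerIntegral_natCast_add hα' hγα, mul_sub, sum_sub_distrib, ← sum_mul, hsumA]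

theorem stmt_13 (α : ℝ) (hα : 0 ≤ α)
    (γα : ℝ) (hγα : Filter.Tendsto (Sa α) Filter.atTop (nhds γα))
    (m r : ℕ) (hm : 0 < m) (hr : 0 < r) (n τ : ℕ → ℕ)
    (hn : ∀ j, 1 ≤ j → j ≤ m → 0 < n j)
    (N : ℕ) (hN : N = ∑ j ∈ Finset.Icc 1 m, n j)
    (A : ℕ → ℝ)
    (hA : ∀ k ≤ N, A k = (-1 : ℝ) ^ (k + N) * (N.choose k : ℝ) *
      ∏ j ∈ Finset.Icc 1 m, ((r * k + n j + τ j).choose (n j) : ℝ)) :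
    (∫ x in (0 : ℝ)..1,
        x ^ ((τ 0 : ℝ) + α) * (∑ k ∈ Finset.range (N + 1), A k * x ^ (r * k)) *
          (1 / (1 - x) + 1 / Real.log x)) =
      ((N.factorial : ℝ) * (r : ℝ) ^ N / ∏ j ∈ Finset.Icc 1 m, ((n j).factorial : ℝ)) * γα -
        ∑ k ∈ Finset.range (N + 1), A k * Sa α (r * k + τ 0) :=
  stmt_13_general α hα γα hγα m r n τ N hN A hA
end

section
/- Let x, t ∈ (0,1), and let τ_0, n_m, τ_m be nonnegative integers with τ_m ≤ τ_0 ≤ n_m + τ_m. Then T_{τ_m,n_m}( x ↦ x^{τ_0}/(1−(1−x)t) )(x) = (−1)^{n_m} x^{n_m+τ_m} t^{n_m+τ_m−τ_0} (t−1)^{τ_0−τ_m} / (1−(1−x)t)^{n_m+1}. -/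
/-!
With `k = τ₀ - τ_m` and `b = (t - 1)/t`, on `x > 0` the function being differentiated is
`x^k / (t (x - b))`. Dividing `x^k` by `x - b` leaves a polynomial of degree `k - 1 < n_m`,
killed by `n_m` derivatives, plus the remainder `b^k / (x - b)`, whose `n`-th derivative is
`(-1)^n n! b^k / (x - b)^(n+1)`.
-/

open Finset

/-- `T_{τ,n}(g)(x) = (1/n!) x^{n+τ} (d/dx)^n (x^{−τ} g(x))`. -/
noncomputable def Tdiff (τ : ℝ) (n : ℕ) (g : ℝ → ℝ) (x : ℝ) : ℝ :=
  (1 / (n.factorial : ℝ)) * x ^ ((n : ℝ) + τ) *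
    iteratedDeriv n (fun y => y ^ (-τ) * g y) x

open scoped Nat

section IteratedDeriv

variable {𝕜 : Type*} [NontriviallyNormedField 𝕜]

theorem iteratedDeriv_sum_mul_pow_eq_zero {n k : ℕ} (hk : k ≤ n) (c : ℕ → 𝕜) (x : 𝕜) :
    iteratedDeriv n (fun y => ∑ i ∈ range k, y ^ i * c i) x = 0 := by
  rw [iteratedDeriv_fun_sum fun i _ => by fun_prop]
  refine sum_eq_zero fun i hi => ?_
  rw [iteratedDeriv_mul_const_field, iteratedDeriv_pow,
    Nat.descFactorial_eq_zero_iff_lt.mpr (by grind)]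
  simp

theorem iteratedDeriv_inv_sub (n : ℕ) (b x : 𝕜) :
    iteratedDeriv n (fun y => (y - b)⁻¹) x = (-1) ^ n * n ! / (x - b) ^ (n + 1) := by
  have := congr_fun (iter_deriv_inv_linear_sub n (1 : 𝕜) b) x
  simp only [one_mul, one_pow, mul_one] at this
  rw [iteratedDeriv_eq_iterate, this, div_eq_mul_inv,
    show (-1 - n : ℤ) = -((n + 1 : ℕ) : ℤ) by push_cast; ring, zpow_neg, zpow_natCast]

theorem iteratedDeriv_pow_div_sub {n k : ℕ} (hk : k ≤ n) {b x : 𝕜} (hx : x ≠ b) :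
    iteratedDeriv n (fun y => y ^ k / (y - b)) x =
      b ^ k * ((-1) ^ n * n ! / (x - b) ^ (n + 1)) := by
  have hsplit : (fun y => y ^ k / (y - b)) =ᶠ[nhds x]
      fun y => (∑ i ∈ range k, y ^ i * b ^ (k - 1 - i)) + b ^ k * (y - b)⁻¹ := by
    filter_upwards [eventually_ne_nhds hx] with y hy
    have hyb : y - b ≠ 0 := sub_ne_zero.mpr hy
    rw [div_eq_iff hyb, add_mul, mul_assoc, inv_mul_cancel₀ hyb, mul_one, geom_sum₂_mul]
    ring
  have hxb : x - b ≠ 0 := sub_ne_zero.mpr hx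
  rw [hsplit.iteratedDeriv_eq, iteratedDeriv_fun_add (by fun_prop) (by fun_prop),
    iteratedDeriv_sum_mul_pow_eq_zero hk, iteratedDeriv_const_mul_field, iteratedDeriv_inv_sub,
    zero_add]

end IteratedDeriv

theorem stmt_17 (x t : ℝ) (hx : x ∈ Set.Ioo (0 : ℝ) 1) (ht : t ∈ Set.Ioo (0 : ℝ) 1)
    (τ₀ nm τm : ℕ) (h1 : τm ≤ τ₀) (h2 : τ₀ ≤ nm + τm) :
    Tdiff (τm : ℝ) nm (fun y => y ^ τ₀ / (1 - (1 - y) * t)) x =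
      (-1 : ℝ) ^ nm *
        (x ^ (nm + τm) * t ^ (nm + τm - τ₀) * (t - 1) ^ (τ₀ - τm)) /
        (1 - (1 - x) * t) ^ (nm + 1) := by
  obtain ⟨hx0, -⟩ := hx
  obtain ⟨ht0, ht1⟩ := ht
  obtain ⟨k, rfl⟩ := Nat.exists_eq_add_of_le h1
  obtain ⟨m, rfl⟩ : ∃ m, nm = k + m := Nat.exists_eq_add_of_le (by omega)
  obtain ⟨b, hb⟩ : ∃ b, t * b = t - 1 := ⟨(t - 1) / t, by field_simp⟩
  have hxb : x ≠ b := by nlinarith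
  have hfactor (y : ℝ) : 1 - (1 - y) * t = t * (y - b) := by linear_combination hb
  have hlocal : (fun y : ℝ => y ^ (-(τm : ℝ)) * (y ^ (τm + k) / (1 - (1 - y) * t)))
      =ᶠ[nhds x] fun y => t⁻¹ * (y ^ k / (y - b)) := by
    filter_upwards [Ioi_mem_nhds hx0] with y (hy : 0 < y)
    rw [Real.rpow_neg hy.le, Real.rpow_natCast, hfactor, pow_add]
    field_simp
  rw [Tdiff, hlocal.iteratedDeriv_eq, iteratedDeriv_const_mul_field,
    iteratedDeriv_pow_div_sub (by omega) hxb, ← Nat.cast_add, Real.rpow_natCast,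
    show x - b = (1 - (1 - x) * t) / t by rw [hfactor]; field_simp,
    show k + m + τm - (τm + k) = m by omega, Nat.add_sub_cancel_left, ← hb, div_pow, mul_pow]
  field_simp
  ring
end

section
/- Let m ≥ 1 and let n_1, …, n_m be positive integers, τ_0, τ_1, …, τ_m nonnegative integers with 0 ≤ τ_0 − τ_m ≤ n_m and n_m + τ_m ≥ n_j + τ_j for j = 1, …, m−1. Then for x, t ∈ (0,1): [ T_{τ_{m−1},n_{m−1}} ∘ ⋯ ∘ T_{τ_1,n_1} ∘ T_{τ_m,n_m} ]( x ↦ x^{τ_0}/(1−(1−x)t) )(x) = (−1)^{n_m} ∏_{j=1}^{m} C(n_m+τ_m−τ_j, n_j) · [ x^{n_m+τ_m} t^{n_m+τ_m−τ_0} (t−1)^{τ_0−τ_m} / (1−t+xt)^{n_m+1} ] · Q_m( xt/(1−t+xt) ). -/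
open Finset

/-- The composition `T_{τ_{m−1},n_{m−1}} ∘ ⋯ ∘ T_{τ_1,n_1} ∘ T_{τ_m,n_m}`
(parameters indexed from 1). -/
noncomputable def TdiffChain (m : ℕ) (n τ : ℕ → ℕ) (g : ℝ → ℝ) : ℝ → ℝ :=
  List.foldl (fun h j => Tdiff (τ j : ℝ) (n j) h) (Tdiff (τ m : ℝ) (n m) g)
    (List.range' 1 (m - 1))

/-- The polynomial `Q_m(y)` (with parameters `n_1,…,n_m`, `τ_1,…,τ_m`, indexed from 1):
`Q_1 ≡ 1`, and for `m ≥ 2`,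
`Q_m(y) = ∑_{k_1=0}^{n_1} ⋯ ∑_{k_{m−1}=0}^{n_{m−1}} ∏_{j=1}^{m−1}
  (−n_j)_{k_j} (1+n_m+τ_m−τ_{j+1})_{k_1+⋯+k_j} /
    (k_j! (1+n_m+τ_m−n_j−τ_j)_{k_1+⋯+k_j}) · y^{k_j}`. -/
noncomputable def Q (m : ℕ) (n τ : ℕ → ℕ) (y : ℝ) : ℝ :=
  if m = 1 then 1
  else
    ∑ k ∈ Fintype.piFinset (fun j : Fin (m - 1) => Finset.range (n (j.1 + 1) + 1)),
      ∏ j : Fin (m - 1),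
        ((ascPochhammer ℝ (k j)).eval (-(n (j.1 + 1) : ℝ)) *
            (ascPochhammer ℝ
                (∑ i ∈ Finset.univ.filter fun i : Fin (m - 1) => i ≤ j, k i)).eval
              ((1 : ℝ) + n m + τ m - τ (j.1 + 2)) /
            (((k j).factorial : ℝ) *
              (ascPochhammer ℝ
                  (∑ i ∈ Finset.univ.filter fun i : Fin (m - 1) => i ≤ j, k i)).eval
                ((1 : ℝ) + n m + τ m - n (j.1 + 1) - τ (j.1 + 1))) *
          y ^ k j)

/-!
Write `L = 1 - t + y t`. By Leibniz' rule, `T_{τ,n}(y^{τ+a} L^{-b})` with `n ≤ a` is a combination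
of the `t^l y^{τ+a+l} L^{-(b+l)}`, `l ≤ n`. A partial-fraction expansion of `y^{τ_0-τ_m} / L`, whose
polynomial part is killed by the `n_m ≥ τ_0 - τ_m` derivatives, gives
`T_{τ_m,n_m}(y^{τ_0} / L) = (-1)^{n_m} t^{n_m+τ_m-τ_0} (t-1)^{τ_0-τ_m} y^{n_m+τ_m} L^{-(n_m+1)}`.
Hence each further `T_{τ_j,n_j}` turns a sum over tuples `(k_1,…,k_{j-1})` of multiples of
`y^{n_m+τ_m} L^{-(n_m+1)} (yt/L)^{k_1+⋯+k_{j-1}}` into a sum over `(k_1,…,k_j)`. Once the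
coefficients are suitably normalised, the new coefficient is `C(n_m+τ_m-τ_j, n_j)` times the `j`-th
factor of `Q_m`; this comes down to the factorial identity
`(a+K)↓_{n-l} (a-n+1)↑_{K+l} = a↓_n (a+1)↑_K`.
-/

open Set

section Operator

variable {t : ℝ}

lemma one_sub_add_mul_pos (ht₀ : 0 ≤ t) (ht₁ : t ≤ 1) {y : ℝ} (hy : 0 < y) :
    0 < 1 - t + y * t := by
  rcases ht₁.lt_or_eq with ht₁ | rfl
  · nlinarith
  · linarith

lemma hasDerivAt_inv_linear_pow {y : ℝ} (hy : 1 - t + y * t ≠ 0) (b : ℕ) :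
    HasDerivAt (fun z => (1 - t + z * t)⁻¹ ^ b) (-(b * t) * (1 - t + y * t)⁻¹ ^ (b + 1)) y := by
  have hL : HasDerivAt (fun z => 1 - t + z * t) t y := by
    simpa using ((hasDerivAt_id y).mul_const t).const_add (1 - t)
  cases b with
  | zero => simpa using hasDerivAt_const y (1 : ℝ)
  | succ b =>
    refine ((hL.inv hy).pow (b + 1)).congr_deriv ?_
    simp only [Nat.add_sub_cancel, Pi.inv_apply, div_eq_mul_inv, ← inv_pow]
    push_cast
    ring

lemma iteratedDeriv_inv_linear_pow (b k : ℕ) :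
    EqOn (iteratedDeriv k fun y => (1 - t + y * t)⁻¹ ^ b)
      (fun y => (-t) ^ k * (ascPochhammer ℝ k).eval (b : ℝ) * (1 - t + y * t)⁻¹ ^ (b + k))
      {y | 1 - t + y * t ≠ 0} := by
  induction k with
  | zero => intro y _; simp
  | succ k ih =>
    intro y hy
    have hU : IsOpen {y : ℝ | 1 - t + y * t ≠ 0} := isOpen_ne_fun (by fun_prop) continuous_const
    rw [iteratedDeriv_succ, ih.deriv hU hy,
      ((hasDerivAt_inv_linear_pow hy (b + k)).const_mul _).deriv, ascPochhammer_succ_eval]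
    push_cast
    ring

lemma iteratedDeriv_inv_linear_pow_mul_pow {y : ℝ} (hy : 1 - t + y * t ≠ 0) (a b n : ℕ) :
    iteratedDeriv n (fun z => (1 - t + z * t)⁻¹ ^ b * z ^ a) y =
      ∑ l ∈ range (n + 1), n.choose l *
        ((-t) ^ l * (ascPochhammer ℝ l).eval (b : ℝ) * (1 - t + y * t)⁻¹ ^ (b + l)) *
        (a.descFactorial (n - l) * y ^ (a - (n - l))) := by
  rw [iteratedDeriv_fun_mul (by fun_prop (disch := assumption)) (by fun_prop)]
  refine sum_congr rfl fun l _ => ?_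
  rw [iteratedDeriv_inv_linear_pow b l hy, iteratedDeriv_pow]

lemma Tdiff_congr {τ : ℝ} {n : ℕ} {f g : ℝ → ℝ} (hfg : EqOn f g (Ioi 0)) :
    EqOn (Tdiff τ n f) (Tdiff τ n g) (Ioi 0) := by
  intro y hy
  have h : EqOn (fun z => z ^ (-τ) * f z) (fun z => z ^ (-τ) * g z) (Ioi 0) :=
    fun z hz => by simp only [hfg hz]
  simp only [Tdiff, h.iteratedDeriv_of_isOpen isOpen_Ioi n hy]

lemma Tdiff_const_mul (τ : ℝ) (n : ℕ) (c : ℝ) (f : ℝ → ℝ) (y : ℝ) :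
    Tdiff τ n (fun z => c * f z) y = c * Tdiff τ n f y := by
  have h : (fun z => z ^ (-τ) * (c * f z)) = fun z => c * (z ^ (-τ) * f z) := by
    funext z; ring
  simp only [Tdiff, h, iteratedDeriv_const_mul_field]
  ring

lemma Tdiff_finset_sum {ι : Type*} (s : Finset ι) (τ : ℝ) (n : ℕ) (f : ι → ℝ → ℝ) {y : ℝ}
    (hy : 0 < y) (hf : ∀ i ∈ s, ContDiffAt ℝ n (f i) y) :
    Tdiff τ n (fun z => ∑ i ∈ s, f i z) y = ∑ i ∈ s, Tdiff τ n (f i) y := by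
  simp only [Tdiff, Finset.mul_sum]
  rw [iteratedDeriv_fun_sum fun i hi => (Real.contDiffAt_rpow_const_of_ne hy.ne').mul (hf i hi),
    mul_sum]

noncomputable def stepCoeff (n a b l : ℕ) : ℝ :=
  n.choose l * a.descFactorial (n - l) * (-1) ^ l * (ascPochhammer ℝ l).eval (b : ℝ) /
    n.factorial

lemma Tdiff_pow_mul_inv_linear_pow {y : ℝ} (hy : 0 < y) (hL : 1 - t + y * t ≠ 0)
    (τ b : ℕ) {n a : ℕ} (hn : n ≤ a) :
    Tdiff τ n (fun z => z ^ (τ + a) * (1 - t + z * t)⁻¹ ^ b) y =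
      ∑ l ∈ range (n + 1), stepCoeff n a b l * t ^ l *
        (y ^ (τ + a + l) * (1 - t + y * t)⁻¹ ^ (b + l)) := by
  have h : EqOn (fun z => z ^ (-(τ : ℝ)) * (z ^ (τ + a) * (1 - t + z * t)⁻¹ ^ b))
      (fun z => (1 - t + z * t)⁻¹ ^ b * z ^ a) (Ioi 0) := by
    intro z hz
    have hτ : z ^ (τ : ℝ) ≠ 0 := (Real.rpow_pos_of_pos hz τ).ne'
    simp only [pow_add, ← Real.rpow_natCast z τ, Real.rpow_neg (le_of_lt hz)]
    field_simp
  rw [Tdiff, h.iteratedDeriv_of_isOpen isOpen_Ioi n hy,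
    iteratedDeriv_inv_linear_pow_mul_pow hL, mul_sum]
  refine sum_congr rfl fun l hl => ?_
  have hl : l ≤ n := Nat.lt_succ_iff.mp (mem_range.mp hl)
  have hpow : y ^ ((n : ℝ) + τ) * y ^ (a - (n - l)) = y ^ (τ + a + l) := by
    rw [← Nat.cast_add, Real.rpow_natCast, ← pow_add]
    congr 1
    omega
  rw [stepCoeff, ← hpow, neg_pow]
  field_simp

lemma pow_mul_inv_linear_eq (ht : t ≠ 0) (a : ℕ) {z : ℝ} (hz : 1 - t + z * t ≠ 0) :
    z ^ a * (1 - t + z * t)⁻¹ =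
      t⁻¹ * ∑ i ∈ range a, z ^ i * ((t - 1) / t) ^ (a - 1 - i) +
        ((t - 1) / t) ^ a * (1 - t + z * t)⁻¹ ^ 1 := by
  have key : ∀ S c : ℝ, S * ((1 - t + z * t) / t) = z ^ a - c ^ a →
      z ^ a * (1 - t + z * t)⁻¹ = t⁻¹ * S + c ^ a * (1 - t + z * t)⁻¹ ^ 1 := by
    intro S c h
    have hz' : 1 - t + t * z ≠ 0 := by rwa [mul_comm t]
    rw [show z ^ a = S * ((1 - t + z * t) / t) + c ^ a by linarith]
    field_simp
  refine key _ _ ?_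
  rw [← geom_sum₂_mul]
  congr 1
  field_simp
  ring

lemma Tdiff_pow_div_linear (ht₀ : 0 < t) (ht₁ : t ≤ 1) {y : ℝ} (hy : 0 < y) {τ τ₀ n : ℕ}
    (hτ : τ ≤ τ₀) (hτn : τ₀ - τ ≤ n) :
    Tdiff τ n (fun z => z ^ τ₀ / (1 - (1 - z) * t)) y =
      (-1) ^ n * t ^ (n + τ - τ₀) * (t - 1) ^ (τ₀ - τ) *
        (y ^ (n + τ) * (1 - t + y * t)⁻¹ ^ (n + 1)) := by
  set a := τ₀ - τ
  have hL : ∀ z ∈ Ioi (0 : ℝ), 1 - t + z * t ≠ 0 :=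
    fun z hz => (one_sub_add_mul_pos ht₀.le ht₁ hz).ne'
  have h : EqOn (fun z => z ^ (-(τ : ℝ)) * (z ^ τ₀ / (1 - (1 - z) * t)))
      (fun z => t⁻¹ * ∑ i ∈ range a, z ^ i * ((t - 1) / t) ^ (a - 1 - i) +
        ((t - 1) / t) ^ a * (1 - t + z * t)⁻¹ ^ 1) (Ioi 0) := by
    intro z hz
    have hτ' : z ^ (τ : ℝ) ≠ 0 := (Real.rpow_pos_of_pos hz τ).ne'
    dsimp only
    rw [← pow_mul_inv_linear_eq ht₀.ne' a (hL z hz), show τ₀ = τ + a by omega, pow_add,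
      ← Real.rpow_natCast z τ, Real.rpow_neg (le_of_lt hz)]
    field_simp
    ring
  have hpoly : ∀ i ∈ range a,
      iteratedDeriv n (fun z => z ^ i * ((t - 1) / t) ^ (a - 1 - i)) y = 0 := by
    intro i hi
    rw [iteratedDeriv_mul_const_field, iteratedDeriv_pow,
      Nat.descFactorial_eq_zero_iff_lt.mpr (by simp at hi; omega)]
    simp
  rw [Tdiff, h.iteratedDeriv_of_isOpen isOpen_Ioi n hy,
    iteratedDeriv_fun_add (by fun_prop) (by fun_prop (disch := exact hL y hy)),
    iteratedDeriv_const_mul_field, iteratedDeriv_fun_sum (by fun_prop), sum_eq_zero hpoly, mul_zero, zero_add,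
    iteratedDeriv_const_mul_field, iteratedDeriv_inv_linear_pow 1 n (hL y hy),
    Nat.cast_one, ascPochhammer_eval_one, ← Nat.cast_add, Real.rpow_natCast,
    show n + τ - τ₀ = n - a by omega]
  have htn : t ^ n = t ^ a * t ^ (n - a) := by rw [← pow_add]; congr 1; omega
  rw [neg_pow, htn, add_comm 1 n, div_pow]
  field_simp

end Operator

open Nat in
lemma descFactorial_mul_ascFactorial_eq {a n S l : ℕ} (hl : l ≤ n) (hn : n ≤ a) :
    (a + S).descFactorial (n - l) * (a - n + 1).ascFactorial (S + l) =
      a.descFactorial n * (a + 1).ascFactorial S := by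
  refine Nat.eq_of_mul_eq_mul_left (a - n).factorial_pos ?_
  calc (a - n)! * ((a + S).descFactorial (n - l) * (a - n + 1).ascFactorial (S + l))
      = (a + S - (n - l))! * (a + S).descFactorial (n - l) := by
        rw [mul_left_comm, factorial_mul_ascFactorial, show a - n + (S + l) = a + S - (n - l) by
          omega, mul_comm]
    _ = (a + S)! := factorial_mul_descFactorial (by omega)
    _ = (a - n)! * (a.descFactorial n * (a + 1).ascFactorial S) := by
        rw [← mul_assoc, factorial_mul_descFactorial hn, factorial_mul_ascFactorial]

lemma ascPochhammer_eval_add {R : Type*} [CommSemiring R] (x : R) (S l : ℕ) :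
    (ascPochhammer R (S + l)).eval x =
      (ascPochhammer R S).eval x * (ascPochhammer R l).eval (x + S) := by
  rw [← ascPochhammer_mul]
  simp

lemma ascPochhammer_eval_natCast_add_one (a k : ℕ) :
    (ascPochhammer ℝ k).eval ((a : ℝ) + 1) = (a + 1).ascFactorial k := by
  exact_mod_cast ascPochhammer_nat_eq_natCast_ascFactorial ℝ (a + 1) k

lemma ascPochhammer_eval_neg_natCast_s18 (n k : ℕ) :
    (ascPochhammer ℝ k).eval (-(n : ℝ)) = (-1) ^ k * (k.factorial * n.choose k) := by
  rw [ascPochhammer_eval_neg_eq_descPochhammer, descPochhammer_eval_eq_descFactorial,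
    Nat.descFactorial_eq_factorial_mul_choose]
  push_cast
  ring

lemma ascPochhammer_div_mul_stepCoeff {a n p S l : ℕ} (hl : l ≤ n) (hn : n ≤ a) :
    (ascPochhammer ℝ S).eval ((p : ℝ) + 1) / (ascPochhammer ℝ S).eval ((a : ℝ) + 1) *
        stepCoeff n (a + S) (p + 1 + S) l =
      a.choose n * ((ascPochhammer ℝ l).eval (-(n : ℝ)) /
        (l.factorial * (ascPochhammer ℝ (S + l)).eval (((a - n : ℕ) : ℝ) + 1))) *
        (ascPochhammer ℝ (S + l)).eval ((p : ℝ) + 1) := by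
  have key : ((a + S).descFactorial (n - l) : ℝ) * (a - n + 1).ascFactorial (S + l) =
      n.factorial * a.choose n * (a + 1).ascFactorial S := by
    rw [← Nat.cast_mul, descFactorial_mul_ascFactorial_eq hl hn,
      Nat.descFactorial_eq_factorial_mul_choose]
    push_cast
    ring
  have hB : ((a + 1).ascFactorial S : ℝ) ≠ 0 := by positivity
  have hF : ((a - n + 1).ascFactorial (S + l) : ℝ) ≠ 0 := by positivity
  rw [stepCoeff, ascPochhammer_eval_add ((p : ℝ) + 1) S l, ascPochhammer_eval_natCast_add_one a,
    ascPochhammer_eval_natCast_add_one (a - n), ascPochhammer_eval_neg_natCast_s18]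
  push_cast
  field_simp
  linear_combination (ascPochhammer ℝ S).eval ((p : ℝ) + 1) * (n.choose l : ℝ) *
    (ascPochhammer ℝ l).eval ((p : ℝ) + 1 + S) * key

noncomputable def qCoeff (m : ℕ) (n τ : ℕ → ℕ) {j : ℕ} (k : Fin j → ℕ) : ℝ :=
  ∏ i : Fin j,
    (ascPochhammer ℝ (k i)).eval (-(n (i.1 + 1) : ℝ)) *
        (ascPochhammer ℝ (∑ i' ∈ univ.filter fun i' => i' ≤ i, k i')).eval
          ((1 : ℝ) + n m + τ m - τ (i.1 + 2)) /
      (((k i).factorial : ℝ) *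
        (ascPochhammer ℝ (∑ i' ∈ univ.filter fun i' => i' ≤ i, k i')).eval
          ((1 : ℝ) + n m + τ m - n (i.1 + 1) - τ (i.1 + 1)))

lemma Q_eq_sum_qCoeff (m : ℕ) (n τ : ℕ → ℕ) (y : ℝ) :
    Q m n τ y = ∑ k ∈ Fintype.piFinset (fun i : Fin (m - 1) => range (n (i.1 + 1) + 1)),
      qCoeff m n τ k * y ^ ∑ i, k i := by
  unfold Q
  split_ifs with hm
  · subst hm
    simp [qCoeff]
  · refine sum_congr rfl fun k _ => ?_
    rw [qCoeff, ← prod_pow_eq_pow_sum, ← prod_mul_distrib]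

lemma sum_filter_le_castSucc_snoc {j : ℕ} (k : Fin j → ℕ) (l : ℕ) (i : Fin j) :
    ∑ i' ∈ univ.filter (fun i' => i' ≤ i.castSucc), (Fin.snoc k l : Fin (j + 1) → ℕ) i' =
      ∑ i' ∈ univ.filter (fun i' => i' ≤ i), k i' := by
  simp [sum_filter, Fin.sum_univ_castSucc]

lemma sum_filter_le_last_snoc {j : ℕ} (k : Fin j → ℕ) (l : ℕ) :
    ∑ i' ∈ univ.filter (fun i' => i' ≤ Fin.last j), (Fin.snoc k l : Fin (j + 1) → ℕ) i' =
      ∑ i, k i + l := by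
  simp [Fin.sum_univ_castSucc, Fin.le_last]

lemma qCoeff_snoc (m : ℕ) (n τ : ℕ → ℕ) {j : ℕ} (k : Fin j → ℕ) (l : ℕ) :
    qCoeff m n τ (Fin.snoc k l : Fin (j + 1) → ℕ) = qCoeff m n τ k *
      ((ascPochhammer ℝ l).eval (-(n (j + 1) : ℝ)) *
          (ascPochhammer ℝ (∑ i, k i + l)).eval ((1 : ℝ) + n m + τ m - τ (j + 2)) /
        ((l.factorial : ℝ) *
          (ascPochhammer ℝ (∑ i, k i + l)).eval ((1 : ℝ) + n m + τ m - n (j + 1) - τ (j + 1)))) := by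
  simp only [qCoeff, Fin.prod_univ_castSucc, Fin.snoc_castSucc, Fin.snoc_last,
    sum_filter_le_castSucc_snoc, sum_filter_le_last_snoc, Fin.val_castSucc, Fin.val_last]

lemma sum_piFinset_snoc {α β : Type*} [AddCommMonoid β] {j : ℕ} (s : Fin (j + 1) → Finset α)
    (f : (Fin (j + 1) → α) → β) :
    ∑ k ∈ Fintype.piFinset s, f k =
      ∑ k ∈ Fintype.piFinset (fun i : Fin j => s i.castSucc), ∑ l ∈ s (Fin.last j),
        f (Fin.snoc k l) := by
  rw [← sum_product']
  refine sum_nbij' (fun k => (Fin.init k, k (Fin.last j))) (fun p => Fin.snoc p.1 p.2)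
    ?_ ?_ ?_ ?_ ?_
  · intro k hk
    simp only [Fintype.mem_piFinset, mem_product] at hk ⊢
    exact ⟨fun i => hk i.castSucc, hk (Fin.last j)⟩
  · intro p hp
    simp only [Fintype.mem_piFinset, mem_product] at hp ⊢
    intro i
    induction i using Fin.lastCases with
    | last => simpa using hp.2
    | cast i => simpa using hp.1 i
  · intro k _
    exact Fin.snoc_init_self k
  · intro p _
    simp
  · intro k _
    rw [Fin.snoc_init_self]

lemma foldl_range'_succ {α : Type*} (f : α → ℕ → α) (x : α) (j : ℕ) :
    (List.range' 1 (j + 1)).foldl f x = f ((List.range' 1 j).foldl f x) (j + 1) := by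
  rw [List.range'_concat, List.foldl_append]
  simp [add_comm]

section Chain

variable (m : ℕ) (n τ : ℕ → ℕ) (t : ℝ)

-- The factor `(n_m + 1)_{|k|} / (1 + n_m + τ_m - τ_{j+1})_{|k|}` normalises the coefficients so
-- that applying `T_{τ_{j+1},n_{j+1}}` contributes exactly one more factor of `Q`; it is `1` for
-- `j = m - 1`.
noncomputable def chainSum (j : ℕ) (y : ℝ) : ℝ :=
  ∑ k ∈ Fintype.piFinset (fun i : Fin j => range (n (i.1 + 1) + 1)),
    qCoeff m n τ k * ((ascPochhammer ℝ (∑ i, k i)).eval ((n m : ℝ) + 1) /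
      (ascPochhammer ℝ (∑ i, k i)).eval ((1 : ℝ) + n m + τ m - τ (j + 1))) * t ^ (∑ i, k i) *
    (y ^ (n m + τ m + ∑ i, k i) * (1 - t + y * t)⁻¹ ^ (n m + 1 + ∑ i, k i))

variable {m n τ t}

lemma chainSum_zero (y : ℝ) :
    chainSum m n τ t 0 y = y ^ (n m + τ m) * (1 - t + y * t)⁻¹ ^ (n m + 1) := by
  simp [chainSum, qCoeff]

lemma chainSum_last (hm : 1 ≤ m) (y : ℝ) :
    chainSum m n τ t (m - 1) y = y ^ (n m + τ m) * (1 - t + y * t)⁻¹ ^ (n m + 1) *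
      Q m n τ (y * t / (1 - t + y * t)) := by
  rw [Q_eq_sum_qCoeff, chainSum, mul_sum]
  refine sum_congr rfl fun k _ => ?_
  rw [Nat.sub_add_cancel hm, show (1 : ℝ) + n m + τ m - τ m = n m + 1 by ring,
    div_self (ascPochhammer_pos _ _ (by positivity)).ne', div_eq_mul_inv, mul_pow, mul_pow,
    pow_add, pow_add]
  ring

lemma qCoeff_mul_stepCoeff {j : ℕ} (hτn : n (j + 1) + τ (j + 1) ≤ n m + τ m)
    (hτ' : τ (j + 2) ≤ n m + τ m) (k : Fin j → ℕ) {l : ℕ} (hl : l ≤ n (j + 1)) :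
    qCoeff m n τ k * ((ascPochhammer ℝ (∑ i, k i)).eval ((n m : ℝ) + 1) /
        (ascPochhammer ℝ (∑ i, k i)).eval ((1 : ℝ) + n m + τ m - τ (j + 1))) *
      stepCoeff (n (j + 1)) (n m + τ m - τ (j + 1) + ∑ i, k i) (n m + 1 + ∑ i, k i) l =
    (n m + τ m - τ (j + 1)).choose (n (j + 1)) * (qCoeff m n τ (Fin.snoc k l : Fin (j + 1) → ℕ) *
      ((ascPochhammer ℝ (∑ i, k i + l)).eval ((n m : ℝ) + 1) /
        (ascPochhammer ℝ (∑ i, k i + l)).eval ((1 : ℝ) + n m + τ m - τ (j + 2)))) := by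
  have ha : (1 : ℝ) + n m + τ m - τ (j + 1) = ((n m + τ m - τ (j + 1) : ℕ) : ℝ) + 1 := by
    rw [Nat.cast_sub (by omega)]; push_cast; ring
  have han : (1 : ℝ) + n m + τ m - n (j + 1) - τ (j + 1) =
      ((n m + τ m - τ (j + 1) - n (j + 1) : ℕ) : ℝ) + 1 := by
    rw [Nat.cast_sub (by omega), Nat.cast_sub (by omega)]; push_cast; ring
  have hX : (ascPochhammer ℝ (∑ i, k i + l)).eval ((1 : ℝ) + n m + τ m - τ (j + 2)) ≠ 0 := by
    refine (ascPochhammer_pos _ _ ?_).ne'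
    have : (τ (j + 2) : ℝ) ≤ n m + τ m := by exact_mod_cast hτ'
    linarith
  rw [qCoeff_snoc, ha, han, mul_assoc, ascPochhammer_div_mul_stepCoeff hl (by omega)]
  field_simp

lemma Tdiff_chainSum {j : ℕ} (hτn : n (j + 1) + τ (j + 1) ≤ n m + τ m)
    (hτ' : τ (j + 2) ≤ n m + τ m) {y : ℝ} (hy : 0 < y) (hL : 1 - t + y * t ≠ 0) :
    Tdiff (τ (j + 1)) (n (j + 1)) (chainSum m n τ t j) y =
      (n m + τ m - τ (j + 1)).choose (n (j + 1)) * chainSum m n τ t (j + 1) y := by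
  unfold chainSum
  rw [Tdiff_finset_sum _ _ _ _ hy (fun k _ => by fun_prop (disch := exact hL)),
    sum_piFinset_snoc, mul_sum]
  refine sum_congr rfl fun k _ => ?_
  rw [Tdiff_const_mul, show n m + τ m + ∑ i, k i = τ (j + 1) + (n m + τ m - τ (j + 1) + ∑ i, k i)
    by omega, Tdiff_pow_mul_inv_linear_pow hy hL _ _ (by omega), mul_sum, mul_sum]
  refine sum_congr rfl fun l hl => ?_
  have hl : l ≤ n (j + 1) := Nat.lt_succ_iff.mp (mem_range.mp hl)
  rw [Fin.sum_snoc, show τ (j + 1 + 1) = τ (j + 2) from rfl, pow_add t,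
    show τ (j + 1) + (n m + τ m - τ (j + 1) + ∑ i, k i) + l = n m + τ m + (∑ i, k i + l) by omega,
    ← add_assoc (n m + 1)]
  linear_combination t ^ (∑ i, k i) * t ^ l * (y ^ (n m + τ m + (∑ i, k i + l)) *
    (1 - t + y * t)⁻¹ ^ (n m + 1 + ∑ i, k i + l)) * qCoeff_mul_stepCoeff hτn hτ' k hl

lemma foldl_Tdiff_eqOn (hτ : τ m ≤ τ 0) (hτn : τ 0 - τ m ≤ n m)
    (hmax : ∀ j, 1 ≤ j → j ≤ m - 1 → n j + τ j ≤ n m + τ m) (ht₀ : 0 < t) (ht₁ : t ≤ 1) :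
    ∀ j ≤ m - 1, EqOn ((List.range' 1 j).foldl (fun h i => Tdiff (τ i) (n i) h)
        (Tdiff (τ m) (n m) fun y => y ^ τ 0 / (1 - (1 - y) * t)))
      (fun y => (-1) ^ n m * t ^ (n m + τ m - τ 0) * (t - 1) ^ (τ 0 - τ m) *
        (∏ i ∈ Icc 1 j, ((n m + τ m - τ i).choose (n i) : ℝ)) * chainSum m n τ t j y) (Ioi 0)
  | 0, _ => fun y hy => by
    simp [Tdiff_pow_div_linear ht₀ ht₁ hy hτ hτn, chainSum_zero]
  | j + 1, hj => fun y hy => by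
    dsimp only
    have hτ' : τ (j + 2) ≤ n m + τ m := by
      rcases (show j + 2 ≤ m by omega).lt_or_eq with h | h
      · have := hmax (j + 2) (by omega) (by omega); omega
      · rw [h]; omega
    rw [foldl_range'_succ, Tdiff_congr (foldl_Tdiff_eqOn hτ hτn hmax ht₀ ht₁ j (by omega)) hy,
      Tdiff_const_mul, Tdiff_chainSum (hmax (j + 1) (by omega) hj) hτ' hy
        (one_sub_add_mul_pos ht₀.le ht₁ hy).ne',
      prod_Icc_succ_top (by omega)]
    ring

end Chain

theorem stmt_18_general (m : ℕ) (hm : 1 ≤ m) (n τ : ℕ → ℕ)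
    (hτ : τ m ≤ τ 0) (hτ' : τ 0 - τ m ≤ n m)
    (hmax : ∀ j, 1 ≤ j → j ≤ m - 1 → n j + τ j ≤ n m + τ m)
    (x t : ℝ) (hx : x ∈ Set.Ioo (0 : ℝ) 1) (ht : t ∈ Set.Ioo (0 : ℝ) 1) :
    TdiffChain m n τ (fun y => y ^ τ 0 / (1 - (1 - y) * t)) x =
      (-1 : ℝ) ^ (n m) * (∏ j ∈ Finset.Icc 1 m, ((n m + τ m - τ j).choose (n j) : ℝ)) *
        (x ^ (n m + τ m) * t ^ (n m + τ m - τ 0) * (t - 1) ^ (τ 0 - τ m) /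
          (1 - t + x * t) ^ (n m + 1)) *
        Q m n τ (x * t / (1 - t + x * t)) := by
  have hprod : ∏ j ∈ Icc 1 m, ((n m + τ m - τ j).choose (n j) : ℝ) =
      ∏ j ∈ Icc 1 (m - 1), ((n m + τ m - τ j).choose (n j) : ℝ) := by
    conv_lhs => rw [← Nat.sub_add_cancel hm]
    rw [prod_Icc_succ_top (by omega), Nat.sub_add_cancel hm, Nat.add_sub_cancel, Nat.choose_self,
      Nat.cast_one, mul_one]
  rw [TdiffChain, foldl_Tdiff_eqOn hτ hτ' hmax ht.1 ht.2.le (m - 1) le_rfl hx.1]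
  dsimp only
  rw [chainSum_last hm, hprod]
  simp only [div_eq_mul_inv, inv_pow]
  ring

theorem stmt_18 (m : ℕ) (hm : 1 ≤ m) (n τ : ℕ → ℕ)
    (hn : ∀ j, 1 ≤ j → j ≤ m → 0 < n j)
    (hτ : τ m ≤ τ 0) (hτ' : τ 0 - τ m ≤ n m)
    (hmax : ∀ j, 1 ≤ j → j ≤ m - 1 → n j + τ j ≤ n m + τ m)
    (x t : ℝ) (hx : x ∈ Set.Ioo (0 : ℝ) 1) (ht : t ∈ Set.Ioo (0 : ℝ) 1) :
    TdiffChain m n τ (fun y => y ^ τ 0 / (1 - (1 - y) * t)) x =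
      (-1 : ℝ) ^ (n m) * (∏ j ∈ Finset.Icc 1 m, ((n m + τ m - τ j).choose (n j) : ℝ)) *
        (x ^ (n m + τ m) * t ^ (n m + τ m - τ 0) * (t - 1) ^ (τ 0 - τ m) /
          (1 - t + x * t) ^ (n m + 1)) *
        Q m n τ (x * t / (1 - t + x * t)) :=
  stmt_18_general m hm n τ hτ hτ' hmax x t hx ht
end
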